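/- Let 0 < α < 2 and let C₀ > 2 be a constant with the property that for all C ≥ C₀ and z ∈ 𝔻: Re[1/((1−z)Log(C/(1−z)))] > 1/(2 log(C/2)) and Re[z/((1−z)Log(C/(1−z)))] > −1/(2 log(C/2)). Choose β > 0 and c > 0 with c ≤ 1/log C₀ and α + cβ/(1 − c·log 2) < 2, and define g(z) = z·(1−z)^{−α}·(1 + c·Log(1/(1−z)))^{β} on 𝔻, using principal branches of the logarithm and powers (well defined since Re(1 + c·Log(1/(1−z))) > 1 − c·log 2 > 0). Then g(0) = 0, g'(0) = 1, g(z) ≠ 0 for 0 < |z| < 1, and Re( z·g'(z)/g(z) ) > 1 − α/2 − β/(2/c − 2 log 2) > 0 for all 0 < |z| < 1 (so g is starlike); moreover M(r, g) ≍ (1−r)^{−α}·(log(1/(1−r)))^{β} as r → 1−, i.e. there exist 0 < A ≤ B and r₀ ∈ (0, 1) with A·(1−r)^{−α}(log(1/(1−r)))^{β} ≤ M(r, g) ≤ B·(1−r)^{−α}(log(1/(1−r)))^{β} for all r₀ ≤ r < 1. -/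

import Mathlib

/-!
Write `w(z) = 1 + c·Log(1/(1-z))`, so that `z g'/g = 1 + α·z/(1-z) + β·c z/((1-z) w)`.
On the disk `Re (z/(1-z)) > -1/2`, and for `C = exp(1/c) ≥ C₀` one has `w = c·Log(C/(1-z))`,
so the assumed estimate at this `C` bounds the last real part below by
`-1/(2 log(C/2)) = -1/(2/c - 2 log 2)`.
For the growth, `Re w = 1 + c·log(1/|1-z|)` and `|Im w| ≤ cπ`, so `|w| ≍ log(1/(1-r))` on `|z| = r`,
while `g(r) = r(1-r)^{-α}(1 + c·log(1/(1-r)))^β` realises the lower bound.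
-/

open Set Metric

/-- The maximum modulus `M(r, f) = max_{|z| = r} |f(z)|`. -/
noncomputable def maxModulus (f : ℂ → ℂ) (r : ℝ) : ℝ :=
  sSup ((fun z => ‖f z‖) '' sphere (0 : ℂ) r)

section

open Complex

section UnitDisk

variable {z : ℂ}

lemma one_sub_re_pos (hz : ‖z‖ < 1) : 0 < (1 - z).re := by
  rw [sub_re, one_re]
  linarith [re_le_norm z]

lemma one_sub_ne_zero_of_norm_lt_one (hz : ‖z‖ < 1) : 1 - z ≠ 0 := by
  intro h
  simpa [h] using one_sub_re_pos hz

lemma one_sub_mem_slitPlane (hz : ‖z‖ < 1) : 1 - z ∈ slitPlane :=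
  mem_slitPlane_iff.2 (Or.inl (one_sub_re_pos hz))

lemma inv_one_sub_mem_slitPlane (hz : ‖z‖ < 1) : (1 - z)⁻¹ ∈ slitPlane := by
  refine mem_slitPlane_iff.2 (Or.inl ?_)
  rw [inv_re]
  exact div_pos (one_sub_re_pos hz) (normSq_pos.2 (one_sub_ne_zero_of_norm_lt_one hz))

lemma norm_one_sub_lt_two (hz : ‖z‖ < 1) : ‖1 - z‖ < 2 := by
  linarith [norm_sub_le (1 : ℂ) z, norm_one (α := ℂ)]

lemma neg_half_lt_re_div_one_sub (hz : ‖z‖ < 1) : -(1 / 2) < (z / (1 - z)).re := by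
  have hn : 0 < normSq (1 - z) := normSq_pos.2 (one_sub_ne_zero_of_norm_lt_one hz)
  have hz2 : z.re * z.re + z.im * z.im < 1 := by
    rw [← normSq_apply, normSq_eq_norm_sq]
    nlinarith [norm_nonneg z]
  rw [div_re, ← add_div, lt_div_iff₀ hn]
  simp only [normSq_apply, sub_re, sub_im, one_re, one_im]
  nlinarith

lemma norm_log_inv_one_sub_le (hz : ‖z‖ < 1) :
    ‖log (1 - z)⁻¹‖ ≤ Real.log (1 / (1 - ‖z‖)) + Real.log 2 + Real.pi := by
  have hpos : 0 < ‖1 - z‖ := norm_pos_iff.2 (one_sub_ne_zero_of_norm_lt_one hz)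
  have hlow : Real.log (1 - ‖z‖) ≤ Real.log ‖1 - z‖ := by
    refine Real.log_le_log (by linarith) ?_
    simpa using norm_sub_norm_le (1 : ℂ) z
  have hup : Real.log ‖1 - z‖ ≤ Real.log 2 :=
    Real.log_le_log hpos (norm_one_sub_lt_two hz).le
  have hre : |(log (1 - z)⁻¹).re| ≤ Real.log (1 / (1 - ‖z‖)) + Real.log 2 := by
    rw [log_re, norm_inv, Real.log_inv, one_div, Real.log_inv, abs_le]
    have hr : Real.log (1 - ‖z‖) ≤ 0 := Real.log_nonpos (by linarith) (by linarith [norm_nonneg z])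
    constructor <;> linarith [Real.log_nonneg one_le_two]
  have him : |(log (1 - z)⁻¹).im| ≤ Real.pi := by
    rw [log_im]
    exact abs_arg_le_pi _
  linarith [norm_le_abs_re_add_abs_im (log (1 - z)⁻¹)]

end UnitDisk

noncomputable def logFactor (c z : ℂ) : ℂ := 1 + c * log (1 - z)⁻¹

noncomputable def logPowerFn (a b c z : ℂ) : ℂ := z * (1 - z) ^ (-a) * logFactor c z ^ b

section LogFactor

variable {z : ℂ}

lemma re_logFactor (c : ℝ) (z : ℂ) : (logFactor c z).re = 1 - c * Real.log ‖1 - z‖ := by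
  simp [logFactor, log_re, Real.log_inv]
  ring

lemma re_logFactor_pos {c : ℝ} (hc : 0 ≤ c) (hc2 : c * Real.log 2 < 1) (hz : ‖z‖ < 1) :
    0 < (logFactor c z).re := by
  have hlog : Real.log ‖1 - z‖ < Real.log 2 :=
    Real.log_lt_log (norm_pos_iff.2 (one_sub_ne_zero_of_norm_lt_one hz)) (norm_one_sub_lt_two hz)
  rw [re_logFactor]
  nlinarith

lemma logFactor_ne_zero {c : ℝ} (hc : 0 ≤ c) (hc2 : c * Real.log 2 < 1) (hz : ‖z‖ < 1) :
    logFactor c z ≠ 0 := by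
  intro h
  simpa [h] using re_logFactor_pos hc hc2 hz

lemma logFactor_eq_mul_log {c : ℝ} (hc : 0 < c) (hz : ‖z‖ < 1) :
    logFactor c z = c * log (Real.exp (1 / c) / (1 - z)) := by
  have hc0 : (c : ℂ) ≠ 0 := ofReal_ne_zero.2 hc.ne'
  rw [div_eq_mul_inv, log_ofReal_mul (Real.exp_pos _)
    (inv_ne_zero (one_sub_ne_zero_of_norm_lt_one hz)), Real.log_exp, logFactor]
  push_cast
  field_simp

lemma hasDerivAt_logFactor (c : ℂ) (hz : ‖z‖ < 1) :
    HasDerivAt (logFactor c) (c / (1 - z)) z := by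
  have hu := one_sub_ne_zero_of_norm_lt_one hz
  have h1 := (hasDerivAt_id' z).const_sub 1
  have hlog := (h1.inv hu).clog (inv_one_sub_mem_slitPlane hz)
  refine ((hlog.const_mul c).const_add 1).congr_deriv ?_
  simp only [Pi.inv_apply]
  field_simp

end LogFactor

section LogPowerFn

variable {a b c z : ℂ}

lemma hasDerivAt_logPowerFn (hz : ‖z‖ < 1) (hw : logFactor c z ∈ slitPlane) :
    HasDerivAt (logPowerFn a b c) ((1 - z) ^ (-a) * logFactor c z ^ b *
      (1 + a * (z / (1 - z)) + b * (c * z / ((1 - z) * logFactor c z)))) z := by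
  have hu := one_sub_ne_zero_of_norm_lt_one hz
  have hw0 := slitPlane_ne_zero hw
  have h1 := (hasDerivAt_id' z).const_sub 1
  have hA := h1.cpow_const (c := -a) (one_sub_mem_slitPlane hz)
  have hB := (hasDerivAt_logFactor c hz).cpow_const (c := b) hw
  refine (((hasDerivAt_id z).mul hA).mul hB).congr_deriv ?_
  rw [cpow_sub _ _ hu, cpow_sub _ _ hw0, cpow_one, cpow_one]
  simp only [Pi.mul_apply, id_eq]
  field_simp

@[simp]
lemma logPowerFn_zero : logPowerFn a b c 0 = 0 := by
  simp [logPowerFn]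

lemma deriv_logPowerFn_zero : deriv (logPowerFn a b c) 0 = 1 := by
  have h0 : logFactor c 0 = 1 := by simp [logFactor]
  rw [(hasDerivAt_logPowerFn (by simp) (by simp [h0])).deriv]
  simp [h0]

lemma logPowerFn_ne_zero (hz : ‖z‖ < 1) (hz0 : z ≠ 0) (hw : logFactor c z ≠ 0) :
    logPowerFn a b c z ≠ 0 := by
  unfold logPowerFn
  have hu := one_sub_ne_zero_of_norm_lt_one hz
  exact mul_ne_zero (mul_ne_zero hz0 (by simp [cpow_def_of_ne_zero hu]))
    (by simp [cpow_def_of_ne_zero hw])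

lemma mul_deriv_logPowerFn_div (hz : ‖z‖ < 1) (hz0 : z ≠ 0) (hw : logFactor c z ∈ slitPlane) :
    z * deriv (logPowerFn a b c) z / logPowerFn a b c z =
      1 + a * (z / (1 - z)) + b * (c * z / ((1 - z) * logFactor c z)) := by
  have hg := logPowerFn_ne_zero (a := a) (b := b) hz hz0 (slitPlane_ne_zero hw)
  rw [(hasDerivAt_logPowerFn hz hw).deriv, div_eq_iff hg, logPowerFn]
  ring

end LogPowerFn

section Starlike

variable {z : ℂ}

lemma neg_lt_re_div_logFactor {c : ℝ} (hc : 0 < c) (hz : ‖z‖ < 1)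
    (hest : -(1 / (2 * Real.log (Real.exp (1 / c) / 2))) <
      (z / ((1 - z) * log ((Real.exp (1 / c) : ℂ) / (1 - z)))).re) :
    -(1 / (2 / c - 2 * Real.log 2)) < (c * z / ((1 - z) * logFactor c z)).re := by
  have hc0 : (c : ℂ) ≠ 0 := ofReal_ne_zero.2 hc.ne'
  rw [Real.log_div (Real.exp_pos _).ne' two_ne_zero, Real.log_exp] at hest
  rw [logFactor_eq_mul_log hc hz, mul_left_comm, mul_div_mul_left _ _ hc0]
  convert hest using 3
  ring

lemma lt_re_mul_deriv_logPowerFn_div {α β c : ℝ} (hα : 0 ≤ α) (hβ : 0 < β) (hc : 0 < c)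
    (hc2 : c * Real.log 2 < 1) (hz : ‖z‖ < 1) (hz0 : z ≠ 0)
    (hest : -(1 / (2 * Real.log (Real.exp (1 / c) / 2))) <
      (z / ((1 - z) * log ((Real.exp (1 / c) : ℂ) / (1 - z)))).re) :
    1 - α / 2 - β / (2 / c - 2 * Real.log 2) <
      (z * deriv (logPowerFn α β c) z / logPowerFn α β c z).re := by
  have hw : logFactor c z ∈ slitPlane :=
    mem_slitPlane_iff.2 (Or.inl (re_logFactor_pos hc.le hc2 hz))
  have hX := neg_half_lt_re_div_one_sub hz
  have hY := neg_lt_re_div_logFactor hc hz hest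
  rw [mul_deriv_logPowerFn_div hz hz0 hw, add_re, add_re, one_re, re_ofReal_mul, re_ofReal_mul]
  have hαX : -(α / 2) ≤ α * (z / (1 - z)).re := by nlinarith
  have hβY : -(β / (2 / c - 2 * Real.log 2)) < β * (c * z / ((1 - z) * logFactor c z)).re := by
    rw [div_eq_mul_one_div β]
    nlinarith
  linarith

end Starlike

lemma maxModulus_le {f : ℂ → ℂ} {r M : ℝ} (hM : 0 ≤ M)
    (h : ∀ z ∈ sphere (0 : ℂ) r, ‖f z‖ ≤ M) : maxModulus f r ≤ M :=
  Real.sSup_le (by rintro _ ⟨z, hz, rfl⟩; exact h z hz) hM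

lemma norm_le_maxModulus {f : ℂ → ℂ} {r M : ℝ} (h : ∀ z ∈ sphere (0 : ℂ) r, ‖f z‖ ≤ M)
    {z : ℂ} (hz : z ∈ sphere (0 : ℂ) r) : ‖f z‖ ≤ maxModulus f r :=
  le_csSup ⟨M, by rintro _ ⟨w, hw, rfl⟩; exact h w hw⟩ ⟨z, hz, rfl⟩

section Growth

variable {α β c : ℝ}

lemma norm_logPowerFn_le (hα : 0 ≤ α) (hβ : 0 ≤ β) (hc : 0 ≤ c) {z : ℂ} (hz : ‖z‖ < 1) :
    ‖logPowerFn α β c z‖ ≤ ‖z‖ * (1 - ‖z‖) ^ (-α) *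
      (1 + c * (Real.log (1 / (1 - ‖z‖)) + Real.log 2 + Real.pi)) ^ β := by
  have hA : ‖(1 - z) ^ (-(α : ℂ))‖ ≤ (1 - ‖z‖) ^ (-α) := by
    refine (norm_cpow_le _ _).trans ?_
    simp only [neg_re, ofReal_re, neg_im, ofReal_im, neg_zero, mul_zero, Real.exp_zero, div_one]
    refine Real.rpow_le_rpow_of_nonpos (by linarith) ?_ (by linarith)
    simpa using norm_sub_norm_le (1 : ℂ) z
  have hw : ‖logFactor c z‖ ≤ 1 + c * (Real.log (1 / (1 - ‖z‖)) + Real.log 2 + Real.pi) := by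
    refine (norm_add_le _ _).trans ?_
    rw [norm_one, norm_mul, norm_real, Real.norm_of_nonneg hc]
    gcongr
    exact norm_log_inv_one_sub_le hz
  have hB : ‖logFactor c z ^ (β : ℂ)‖ ≤
      (1 + c * (Real.log (1 / (1 - ‖z‖)) + Real.log 2 + Real.pi)) ^ β := by
    refine (norm_cpow_le _ _).trans ?_
    simp only [ofReal_re, ofReal_im, mul_zero, Real.exp_zero, div_one]
    exact Real.rpow_le_rpow (norm_nonneg _) hw hβ
  rw [logPowerFn, norm_mul, norm_mul]
  gcongr

lemma logPowerFn_ofReal (hc : 0 ≤ c) {r : ℝ} (hr0 : 0 ≤ r) (hr : r < 1) :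
    logPowerFn α β c r = (r * (1 - r) ^ (-α) * (1 + c * Real.log (1 / (1 - r))) ^ β : ℝ) := by
  have h1r : 0 < 1 - r := by linarith
  have ht : 0 ≤ Real.log (1 / (1 - r)) :=
    Real.log_nonneg (one_le_one_div h1r (by linarith))
  have hu : 1 - (r : ℂ) = (1 - r : ℝ) := by push_cast; ring
  have hw : logFactor c r = (1 + c * Real.log (1 / (1 - r)) : ℝ) := by
    rw [logFactor, hu, ← ofReal_inv, ← ofReal_log (inv_nonneg.2 h1r.le), one_div]
    push_cast
    ring
  rw [logPowerFn, hw, hu, ← ofReal_neg, ← ofReal_cpow h1r.le, ← ofReal_cpow (by positivity)]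
  push_cast
  ring

lemma norm_logPowerFn_le_of_mem_sphere (hα : 0 ≤ α) (hβ : 0 ≤ β) (hc : 0 ≤ c) {r : ℝ}
    (hr : r < 1) (ht : Real.pi + Real.log 2 ≤ Real.log (1 / (1 - r))) {z : ℂ}
    (hz : z ∈ sphere (0 : ℂ) r) :
    ‖logPowerFn α β c z‖ ≤ (1 + 2 * c) ^ β * ((1 - r) ^ (-α) * Real.log (1 / (1 - r)) ^ β) := by
  obtain rfl : ‖z‖ = r := mem_sphere_zero_iff_norm.1 hz
  have hbound := norm_logPowerFn_le hα hβ hc hr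
  set t := Real.log (1 / (1 - ‖z‖))
  have hlog2 := Real.log_nonneg one_le_two
  have ht0 : 0 ≤ t := by linarith [Real.pi_pos]
  have hw : 1 + c * (t + Real.log 2 + Real.pi) ≤ (1 + 2 * c) * t := by
    nlinarith [mul_le_mul_of_nonneg_left ht hc, Real.pi_gt_three]
  calc ‖logPowerFn α β c z‖
      ≤ ‖z‖ * (1 - ‖z‖) ^ (-α) * (1 + c * (t + Real.log 2 + Real.pi)) ^ β := hbound
    _ ≤ 1 * (1 - ‖z‖) ^ (-α) * ((1 + 2 * c) * t) ^ β := by gcongr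
    _ = (1 + 2 * c) ^ β * ((1 - ‖z‖) ^ (-α) * t ^ β) := by
        rw [Real.mul_rpow (by positivity) ht0]
        ring

lemma le_maxModulus_logPowerFn (hα : 0 ≤ α) (hβ : 0 ≤ β) (hc : 0 ≤ c) {r : ℝ} (hr0 : 0 ≤ r)
    (hr : r < 1) (ht : Real.pi + Real.log 2 ≤ Real.log (1 / (1 - r))) :
    r * c ^ β * ((1 - r) ^ (-α) * Real.log (1 / (1 - r)) ^ β) ≤
      maxModulus (logPowerFn α β c) r := by
  set t := Real.log (1 / (1 - r))
  have h1r : 0 < 1 - r := by linarith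
  have htpos : 0 ≤ t := by linarith [Real.pi_pos, Real.log_nonneg one_le_two]
  calc r * c ^ β * ((1 - r) ^ (-α) * t ^ β)
      = r * (1 - r) ^ (-α) * (c * t) ^ β := by rw [Real.mul_rpow hc htpos]; ring
    _ ≤ r * (1 - r) ^ (-α) * (1 + c * t) ^ β := by gcongr; linarith
    _ = ‖logPowerFn α β c r‖ := by
        rw [logPowerFn_ofReal hc hr0 hr, norm_real, Real.norm_of_nonneg (by positivity)]
    _ ≤ maxModulus (logPowerFn α β c) r :=
        norm_le_maxModulus (fun z hz => norm_logPowerFn_le_of_mem_sphere hα hβ hc hr ht hz)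
          (by simp [hr0])

lemma exists_maxModulus_logPowerFn_bounds (hα : 0 ≤ α) (hβ : 0 ≤ β) (hc : 0 < c) :
    ∃ A B r₀ : ℝ, 0 < A ∧ A ≤ B ∧ r₀ ∈ Ioo (0 : ℝ) 1 ∧ ∀ r : ℝ, r₀ ≤ r → r < 1 →
      A * ((1 - r) ^ (-α) * Real.log (1 / (1 - r)) ^ β) ≤ maxModulus (logPowerFn α β c) r ∧
      maxModulus (logPowerFn α β c) r ≤
        B * ((1 - r) ^ (-α) * Real.log (1 / (1 - r)) ^ β) := by
  set T := Real.pi + Real.log 2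
  have hT : 0 < T := by positivity
  have hr₀ : 1 - Real.exp (-T) ∈ Ioo (0 : ℝ) 1 :=
    ⟨by linarith [Real.exp_lt_one_iff.2 (neg_lt_zero.2 hT)], by linarith [Real.exp_pos (-T)]⟩
  refine ⟨(1 - Real.exp (-T)) * c ^ β, (1 + 2 * c) ^ β, 1 - Real.exp (-T),
    mul_pos hr₀.1 (Real.rpow_pos_of_pos hc β), ?_, hr₀, fun r hr₀r hr => ?_⟩
  · calc (1 - Real.exp (-T)) * c ^ β ≤ 1 * (1 + 2 * c) ^ β := by
          gcongr
          · exact hr₀.2.le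
          · linarith
      _ = (1 + 2 * c) ^ β := one_mul _
  have h1r : 0 < 1 - r := by linarith
  have ht : T ≤ Real.log (1 / (1 - r)) := by
    rw [one_div, Real.log_inv, le_neg, ← Real.log_exp (-T)]
    exact Real.log_le_log (by linarith) (by linarith)
  have hr0 : 0 ≤ r := hr₀.1.le.trans hr₀r
  have hgrowth : 0 ≤ (1 - r) ^ (-α) * Real.log (1 / (1 - r)) ^ β :=
    mul_nonneg (Real.rpow_nonneg h1r.le _) (Real.rpow_nonneg (hT.le.trans ht) _)
  constructor
  · exact (mul_le_mul_of_nonneg_right (by gcongr) hgrowth).trans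
      (le_maxModulus_logPowerFn hα hβ hc.le hr0 hr ht)
  · exact maxModulus_le (by positivity)
      (fun z hz => norm_logPowerFn_le_of_mem_sphere hα hβ hc.le hr ht hz)

end Growth

end

theorem starlike_example_with_log_growth_general (α β c : ℝ)
    (hα : 0 < α) (hβ : 0 < β) (hc : 0 < c)
    (C₀ : ℝ) (hC₀ : 2 < C₀)
    (hC₀est : ∀ C : ℝ, C₀ ≤ C → ∀ z ∈ ball (0 : ℂ) 1,
      1 / (2 * Real.log (C / 2)) <
        (1 / ((1 - z) * Complex.log ((C : ℂ) / (1 - z)))).re ∧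
      -(1 / (2 * Real.log (C / 2))) <
        (z / ((1 - z) * Complex.log ((C : ℂ) / (1 - z)))).re)
    (hcC₀ : c ≤ 1 / Real.log C₀)
    (hsmall : α + c * β / (1 - c * Real.log 2) < 2)
    (g : ℂ → ℂ)
    (hg : g = fun z : ℂ => z * ((1 - z) ^ (-(α : ℂ))) *
      ((1 + (c : ℂ) * Complex.log ((1 - z)⁻¹)) ^ (β : ℂ))) :
    g 0 = 0 ∧ deriv g 0 = 1 ∧
    (∀ z ∈ ball (0 : ℂ) 1, z ≠ 0 → g z ≠ 0) ∧
    (0 : ℝ) < 1 - α / 2 - β / (2 / c - 2 * Real.log 2) ∧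
    (∀ z ∈ ball (0 : ℂ) 1, z ≠ 0 →
      1 - α / 2 - β / (2 / c - 2 * Real.log 2) < (z * deriv g z / g z).re) ∧
    ∃ A B r₀ : ℝ, 0 < A ∧ A ≤ B ∧ r₀ ∈ Set.Ioo (0 : ℝ) 1 ∧
      ∀ r : ℝ, r₀ ≤ r → r < 1 →
        A * ((1 - r) ^ (-α) * Real.log (1 / (1 - r)) ^ β) ≤ maxModulus g r ∧
        maxModulus g r ≤ B * ((1 - r) ^ (-α) * Real.log (1 / (1 - r)) ^ β) := by
  obtain rfl : g = logPowerFn α β c := hg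
  have hlog2 : 0 < Real.log 2 := Real.log_pos one_lt_two
  have hlogC₀ : Real.log 2 < Real.log C₀ := Real.log_lt_log two_pos hC₀
  have hcC₀' : c * Real.log C₀ ≤ 1 := (le_div_iff₀ (hlog2.trans hlogC₀)).1 hcC₀
  have hc2 : c * Real.log 2 < 1 := by nlinarith
  have hCC₀ : C₀ ≤ Real.exp (1 / c) := by
    rw [← Real.log_le_iff_le_exp (by linarith), le_div_iff₀ hc]
    linarith
  have hdiv : β / (2 / c - 2 * Real.log 2) = c * β / (1 - c * Real.log 2) / 2 := by
    field_simp
  refine ⟨logPowerFn_zero, deriv_logPowerFn_zero, fun z hz hz0 => ?_, by rw [hdiv]; linarith,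
    fun z hz hz0 => ?_, exists_maxModulus_logPowerFn_bounds hα.le hβ.le hc⟩
  · rw [mem_ball_zero_iff] at hz
    exact logPowerFn_ne_zero hz hz0 (logFactor_ne_zero hc.le hc2 hz)
  · exact lt_re_mul_deriv_logPowerFn_div hα.le hβ hc hc2 (mem_ball_zero_iff.1 hz) hz0
      (hC₀est _ hCC₀ z hz).2

/-- for `0 < α < 2`, a constant `C₀ > 2` with the half-plane estimates of
Lemma 4.3, and `β, c > 0` with `c ≤ 1/log C₀` and `α + cβ/(1 − c log 2) < 2`, the
function `g(z) = z·(1−z)^{−α}·(1 + c·Log(1/(1−z)))^{β}` (principal branches) is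
normalized starlike with `Re(z g'/g) > 1 − α/2 − β/(2/c − 2 log 2) > 0`, and
`M(r, g) ≍ (1−r)^{−α}(log(1/(1−r)))^{β}` as `r → 1−`. -/
theorem starlike_example_with_log_growth (α β c : ℝ)
    (hα : 0 < α) (hα2 : α < 2) (hβ : 0 < β) (hc : 0 < c)
    (C₀ : ℝ) (hC₀ : 2 < C₀)
    (hC₀est : ∀ C : ℝ, C₀ ≤ C → ∀ z ∈ ball (0 : ℂ) 1,
      1 / (2 * Real.log (C / 2)) <
        (1 / ((1 - z) * Complex.log ((C : ℂ) / (1 - z)))).re ∧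
      -(1 / (2 * Real.log (C / 2))) <
        (z / ((1 - z) * Complex.log ((C : ℂ) / (1 - z)))).re)
    (hcC₀ : c ≤ 1 / Real.log C₀)
    (hsmall : α + c * β / (1 - c * Real.log 2) < 2)
    (g : ℂ → ℂ)
    (hg : g = fun z : ℂ => z * ((1 - z) ^ (-(α : ℂ))) *
      ((1 + (c : ℂ) * Complex.log ((1 - z)⁻¹)) ^ (β : ℂ))) :
    g 0 = 0 ∧ deriv g 0 = 1 ∧
    (∀ z ∈ ball (0 : ℂ) 1, z ≠ 0 → g z ≠ 0) ∧
    (0 : ℝ) < 1 - α / 2 - β / (2 / c - 2 * Real.log 2) ∧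
    (∀ z ∈ ball (0 : ℂ) 1, z ≠ 0 →
      1 - α / 2 - β / (2 / c - 2 * Real.log 2) < (z * deriv g z / g z).re) ∧
    ∃ A B r₀ : ℝ, 0 < A ∧ A ≤ B ∧ r₀ ∈ Set.Ioo (0 : ℝ) 1 ∧
      ∀ r : ℝ, r₀ ≤ r → r < 1 →
        A * ((1 - r) ^ (-α) * Real.log (1 / (1 - r)) ^ β) ≤ maxModulus g r ∧
        maxModulus g r ≤ B * ((1 - r) ^ (-α) * Real.log (1 / (1 - r)) ^ β) :=
  starlike_example_with_log_growth_general α β c hα hβ hc C₀ hC₀ hC₀est hcC₀ hsmall g hg
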